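/- arXiv:2406.19865 — 2 statements merged into one kernel-verified Lean document; each statement's English description precedes it below -/
import Mathlib

section
/- For all natural numbers n ≥ 2 and m ≥ 2, the binomial coefficient C(n+m-2, n-1) satisfies C(n+m-2, n-1) ≤ e^m · (1 + n/m)^(m-1). -/
theorem binom_bound_nondecreasing (n m : ℕ) (hn : 2 ≤ n) (hm : 2 ≤ m) :
    (Nat.choose (n + m - 2) (n - 1) : ℝ) ≤
      Real.exp 1 ^ m * (1 + (n : ℝ) / (m : ℝ)) ^ (m - 1) := by
  set k := m - 1 with hkdef
  have hk1 : 1 ≤ k := by omega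
  have hK : (1 : ℝ) ≤ (k : ℝ) := by exact_mod_cast hk1
  have hKpos : (0 : ℝ) < (k : ℝ) := by linarith
  have hmpos : (0 : ℝ) < (m : ℝ) := by positivity
  have hNK : (0 : ℝ) ≤ ((n + m - 2 : ℕ) : ℝ) := Nat.cast_nonneg _
  have hswap : Nat.choose (n + m - 2) (n - 1) = Nat.choose (n + m - 2) k := by
    rw [show n - 1 = (n + m - 2) - k by omega, Nat.choose_symm (by omega)]
  rw [hswap]
  have hmK : (m : ℝ) = (k : ℝ) + 1 := by
    have : m = k + 1 := by omega
    rw [this]; push_cast; ring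
  -- step 1: choose ≤ N^k / k!
  have h1 : (Nat.choose (n + m - 2) k : ℝ) ≤ ((n + m - 2 : ℕ) : ℝ) ^ k / (Nat.factorial k) :=
    Nat.choose_le_pow_div k (n + m - 2)
  -- step 2: N^k / k! ≤ (N/k)^k * exp 1 ^ k
  have h2 : ((n + m - 2 : ℕ) : ℝ) ^ k / (Nat.factorial k)
      ≤ (((n + m - 2 : ℕ) : ℝ) / (k : ℝ)) ^ k * Real.exp 1 ^ k := by
    have hfact : ((k : ℝ)) ^ k / (Nat.factorial k) ≤ Real.exp k :=
      Real.pow_div_factorial_le_exp (x := (k:ℝ)) hKpos.le k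
    have hexpk : Real.exp (k : ℝ) = Real.exp 1 ^ k := by
      rw [← Real.exp_nat_mul, mul_one]
    have : ((n + m - 2 : ℕ) : ℝ) ^ k / (Nat.factorial k)
        = (((n + m - 2 : ℕ) : ℝ) / (k : ℝ)) ^ k * ((k : ℝ) ^ k / (Nat.factorial k)) := by
      field_simp
      rw [div_pow, div_mul_cancel₀]; positivity
    rw [this]
    have hb : (0 : ℝ) ≤ (((n + m - 2 : ℕ) : ℝ) / (k : ℝ)) ^ k := by positivity
    calc (((n + m - 2 : ℕ) : ℝ) / (k : ℝ)) ^ k * ((k : ℝ) ^ k / (Nat.factorial k))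
        ≤ (((n + m - 2 : ℕ) : ℝ) / (k : ℝ)) ^ k * Real.exp k :=
          mul_le_mul_of_nonneg_left hfact hb
      _ = (((n + m - 2 : ℕ) : ℝ) / (k : ℝ)) ^ k * Real.exp 1 ^ k := by rw [hexpk]
  -- step 3: (N/k)^k ≤ exp 1 * ((n+m)/m)^k
  have hNle : ((n + m - 2 : ℕ) : ℝ) ≤ (n : ℝ) + (m : ℝ) := by
    push_cast [show (2:ℕ) ≤ n + m by omega]
    linarith
  have h3 : (((n + m - 2 : ℕ) : ℝ) / (k : ℝ)) ^ k
      ≤ Real.exp 1 * (((n : ℝ) + m) / m) ^ k := by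
    have hstep : (((n + m - 2 : ℕ) : ℝ) / (k : ℝ)) ^ k
        ≤ (((n : ℝ) + m) / (k : ℝ)) ^ k := by
      gcongr
    have hsplit : ((n : ℝ) + m) / (k : ℝ)
        = (1 + 1 / (k : ℝ)) * (((n : ℝ) + m) / m) := by
      rw [hmK]; field_simp
    have hone : (1 + 1 / (k : ℝ)) ^ k ≤ Real.exp 1 := by
      have h := Real.add_one_le_exp (1 / (k : ℝ))
      have hbase : (0 : ℝ) ≤ 1 + 1 / (k : ℝ) := by positivity
      calc (1 + 1 / (k : ℝ)) ^ k ≤ Real.exp (1 / (k : ℝ)) ^ k := by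
            apply pow_le_pow_left₀ hbase; linarith
        _ = Real.exp ((k : ℝ) * (1 / (k : ℝ))) := by rw [Real.exp_nat_mul]
        _ = Real.exp 1 := by rw [mul_one_div, div_self (ne_of_gt hKpos)]
    calc (((n + m - 2 : ℕ) : ℝ) / (k : ℝ)) ^ k
        ≤ (((n : ℝ) + m) / (k : ℝ)) ^ k := hstep
      _ = (1 + 1 / (k : ℝ)) ^ k * (((n : ℝ) + m) / m) ^ k := by
          rw [hsplit, mul_pow]
      _ ≤ Real.exp 1 * (((n : ℝ) + m) / m) ^ k := by
          gcongr
  -- combine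
  have hfin : (1 : ℝ) + (n : ℝ) / m = ((n : ℝ) + m) / m := by field_simp; ring
  have hmk1 : m = k + 1 := by omega
  rw [hfin]
  calc (Nat.choose (n + m - 2) k : ℝ)
      ≤ ((n + m - 2 : ℕ) : ℝ) ^ k / (Nat.factorial k) := h1
    _ ≤ (((n + m - 2 : ℕ) : ℝ) / (k : ℝ)) ^ k * Real.exp 1 ^ k := h2
    _ ≤ (Real.exp 1 * (((n : ℝ) + m) / m) ^ k) * Real.exp 1 ^ k := by
        gcongr
    _ = Real.exp 1 ^ m * (((n : ℝ) + m) / m) ^ k := by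
        rw [hmk1, pow_succ]
        ring
end

section
/- For every real number n > 1 and every positive integer m, (1 + n/m)^(-(m-1)/m) ≥ (1/2) · min{1, (m · n^(1/m))/(n · m^(1/m))}, and consequently (1 + n/m)^(-(m-1)/m) ≥ (1/2) · (log n)/n when n ≥ 3. -/
/-!
Put `x = n / m` and `e = (m - 1) / m ∈ [0, 1]`. Since `1 + x ≤ 2 · max 1 x` and `2 ^ e ≤ 2`, we get
`(1 + x) ^ (-e) ≥ ½ · min 1 (x ^ (-e))`, and `x ^ (-e) = m n^(1/m) / (n m^(1/m))`.
For the logarithmic bound, `exp 1 · t ≤ exp t` with `t = log n / m` gives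
`m n^(1/m) ≥ exp 1 · log n`, while `log m ≤ m` gives `m^(1/m) ≤ exp 1`;
hence the ratio is at least `log n / n`, and so is `1`.
-/

open Real

lemma half_min_one_rpow_neg_le_one_add_rpow_neg {x e : ℝ} (hx : 0 < x) (he₀ : 0 ≤ e)
    (he₁ : e ≤ 1) : 1 / 2 * min 1 (x ^ (-e)) ≤ (1 + x) ^ (-e) := by
  have h_two : 1 / 2 ≤ (2 : ℝ) ^ (-e) :=
    calc (1 / 2 : ℝ) = 2 ^ (-1 : ℝ) := by norm_num
      _ ≤ 2 ^ (-e) := rpow_le_rpow_of_exponent_le (by norm_num) (by linarith)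
  rcases le_total x 1 with hx₁ | hx₁
  · calc 1 / 2 * min 1 (x ^ (-e)) ≤ 1 / 2 := by linarith [min_le_left 1 (x ^ (-e))]
      _ ≤ 2 ^ (-e) := h_two
      _ ≤ (1 + x) ^ (-e) := rpow_le_rpow_of_nonpos (by positivity) (by linarith) (by linarith)
  · calc 1 / 2 * min 1 (x ^ (-e)) ≤ 2 ^ (-e) * x ^ (-e) :=
          mul_le_mul h_two (min_le_right _ _) (by positivity) (by positivity)
      _ = (2 * x) ^ (-e) := (mul_rpow (by norm_num) hx.le).symm
      _ ≤ (1 + x) ^ (-e) := rpow_le_rpow_of_nonpos (by positivity) (by linarith) (by linarith)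

lemma div_rpow_neg_sub_one_div_self {a b : ℝ} (ha : 0 < a) (hb : 0 < b) :
    (a / b) ^ (-((b - 1) / b)) = b * a ^ (1 / b) / (a * b ^ (1 / b)) := by
  have h_exp : -((b - 1) / b) = 1 / b - 1 := by field_simp; ring
  rw [h_exp, rpow_sub (div_pos ha hb), rpow_one, div_rpow ha.le hb.le]
  field_simp

lemma rpow_one_div_self_le_exp_one {x : ℝ} (hx : 0 < x) : x ^ (1 / x) ≤ exp 1 := by
  rw [rpow_def_of_pos hx, exp_le_exp, mul_one_div, div_le_one hx]
  linarith [log_le_sub_one_of_pos hx]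

lemma exp_one_mul_log_le_mul_rpow_one_div {x y : ℝ} (hx : 0 < x) (hy : 0 < y) :
    exp 1 * log y ≤ x * y ^ (1 / x) := by
  rw [rpow_def_of_pos hy, mul_one_div]
  calc exp 1 * log y = x * (exp 1 * (log y / x)) := by field_simp
    _ ≤ x * exp (log y / x) := mul_le_mul_of_nonneg_left exp_one_mul_le_exp hx.le

lemma log_div_self_le_min_one_mul_rpow_div {x y : ℝ} (hx : 0 < x) (hy : 1 ≤ y) :
    log y / y ≤ min 1 (x * y ^ (1 / x) / (y * x ^ (1 / x))) := by
  have hy₀ : 0 < y := by linarith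
  refine le_min ((div_le_one hy₀).2 (by linarith [log_le_sub_one_of_pos hy₀])) ?_
  rw [div_le_div_iff₀ hy₀ (by positivity)]
  have h_log : log y * x ^ (1 / x) ≤ x * y ^ (1 / x) :=
    calc log y * x ^ (1 / x) ≤ log y * exp 1 :=
          mul_le_mul_of_nonneg_left (rpow_one_div_self_le_exp_one hx) (log_nonneg hy)
      _ ≤ x * y ^ (1 / x) := by
          rw [mul_comm]; exact exp_one_mul_log_le_mul_rpow_one_div hx hy₀
  nlinarith

theorem one_add_div_rpow_lower_bound (n : ℝ) (hn : 1 < n) (m : ℕ) (hm : 0 < m) :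
    (1 + n / m) ^ (-(((m : ℝ) - 1) / m)) ≥
      (1 / 2) * min 1 ((m * n ^ (1 / (m : ℝ))) / (n * (m : ℝ) ^ (1 / (m : ℝ)))) ∧
    (3 ≤ n → (1 + n / m) ^ (-(((m : ℝ) - 1) / m)) ≥ (1 / 2) * (Real.log n / n)) := by
  have hm₁ : (1 : ℝ) ≤ m := by exact_mod_cast hm
  have h_min : (1 + n / m) ^ (-(((m : ℝ) - 1) / m)) ≥
      (1 / 2) * min 1 ((m * n ^ (1 / (m : ℝ))) / (n * (m : ℝ) ^ (1 / (m : ℝ)))) := by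
    rw [ge_iff_le, ← div_rpow_neg_sub_one_div_self (by linarith) (by linarith)]
    exact half_min_one_rpow_neg_le_one_add_rpow_neg (by positivity)
      (div_nonneg (by linarith) (by linarith)) (div_le_one_of_le₀ (by linarith) (by linarith))
  refine ⟨h_min, fun _ => le_trans ?_ h_min⟩
  exact mul_le_mul_of_nonneg_left
    (log_div_self_le_min_one_mul_rpow_div (by linarith) hn.le) (by norm_num)
end
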